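/- arXiv:2110.12462 — 7 statements merged into one kernel-verified Lean document; each statement's English description precedes it below -/
import Mathlib

section
/- Let H : k^n → k^n be a polynomial map with H(0)=0 whose linear part vanishes, and suppose there exists an invertible linear map T : k^n → k^n such that the Jacobian matrix of T^{-1} ∘ H ∘ T is strictly upper triangular (as a matrix over k[X_1,…,X_n]). Then JH is strongly nilpotent with some index p ≤ n, i.e. JH(X^{(1)})···JH(X^{(n)}) = 0 for all X^{(1)},…,X^{(n)} ∈ k^n. -/
/-!
By the chain rule the Jacobian of `T⁻¹ ∘ H ∘ T` at `x` is `T⁻¹ · JH(T x) · T`. Hence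
`JH(X⁽¹⁾) ⋯ JH(X⁽ⁿ⁾)` is conjugate by `T` to a product of `n` strictly upper triangular
matrices, and such a product vanishes: each factor pushes the nonzero entries one step further
above the diagonal.
-/

/-- The Jacobian matrix of the polynomial map `H : k^n → k^n`, evaluated at a point `x ∈ k^n`. -/
noncomputable def jacEval {k : Type*} [Field k] {n : ℕ}
    (H : Fin n → MvPolynomial (Fin n) k) (x : Fin n → k) : Matrix (Fin n) (Fin n) k :=
  Matrix.of fun i j => MvPolynomial.eval x (MvPolynomial.pderiv j (H i))

/-- The conjugate polynomial map `T⁻¹ ∘ H ∘ T` for a linear map (matrix) `T`. -/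
noncomputable def conjMap {k : Type*} [Field k] {n : ℕ}
    (H : Fin n → MvPolynomial (Fin n) k) (T : Matrix (Fin n) (Fin n) k) :
    Fin n → MvPolynomial (Fin n) k :=
  fun i => ∑ j : Fin n, T⁻¹ i j •
    MvPolynomial.aeval (fun m : Fin n => ∑ r : Fin n, T m r • (MvPolynomial.X r :
      MvPolynomial (Fin n) k)) (H j)

open MvPolynomial Matrix

theorem MvPolynomial.pderiv_aeval {R σ τ : Type*} [CommSemiring R] [Fintype σ]
    (φ : σ → MvPolynomial τ R) (j : τ) (p : MvPolynomial σ R) :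
    pderiv j (aeval φ p) = ∑ r, aeval φ (pderiv r p) * pderiv j (φ r) := by
  classical
  induction p using MvPolynomial.induction_on with
  | C c => simp
  | add p q hp hq => simp only [map_add, hp, hq, add_mul, Finset.sum_add_distrib]
  | mul_X p i hp =>
    rw [map_mul, aeval_X, Derivation.leibniz, hp]
    simp [pderiv_X, Pi.single_apply, apply_ite, ite_mul, add_mul, Finset.sum_add_distrib,
      Finset.mul_sum, mul_assoc]

theorem List.prod_map_units_conj {M : Type*} [Monoid M] (u : Mˣ) (L : List M) :
    (L.map fun x => (u : M) * x * ↑u⁻¹).prod = u * L.prod * ↑u⁻¹ := by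
  induction L with
  | nil => simp
  | cons x L ih => rw [List.map_cons, List.prod_cons, ih, List.prod_cons]; simp [mul_assoc]

theorem Matrix.list_prod_map_conj {m R : Type*} [Fintype m] [DecidableEq m] [CommRing R]
    {T : Matrix m m R} (hT : IsUnit T.det) (L : List (Matrix m m R)) :
    (L.map fun A => T * A * T⁻¹).prod = T * L.prod * T⁻¹ :=
  List.prod_map_units_conj (nonsingInvUnit T hT) L

theorem Matrix.list_prod_apply_eq_zero_of_strictUpper {R : Type*} [Semiring R] {n : ℕ}
    (L : List (Matrix (Fin n) (Fin n) R)) (hL : ∀ A ∈ L, ∀ i j, j ≤ i → A i j = 0)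
    {i j : Fin n} (hij : (j : ℕ) < i + L.length) : L.prod i j = 0 := by
  induction L generalizing i with
  | nil => exact one_apply_ne (by rintro rfl; simp at hij)
  | cons A L ih =>
    rw [List.prod_cons, mul_apply]
    refine Finset.sum_eq_zero fun m _ => ?_
    rcases le_or_gt m i with hm | hm
    · rw [hL A List.mem_cons_self i m hm, zero_mul]
    · have hij' : (j : ℕ) < m + L.length := by rw [List.length_cons] at hij; omega
      rw [ih (fun B hB => hL B (List.mem_cons_of_mem _ hB)) hij', mul_zero]

theorem Matrix.list_prod_eq_zero_of_strictUpper {R : Type*} [Semiring R] {n : ℕ}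
    (L : List (Matrix (Fin n) (Fin n) R)) (hL : ∀ A ∈ L, ∀ i j, j ≤ i → A i j = 0)
    (hn : n ≤ L.length) : L.prod = 0 := by
  ext i j
  exact list_prod_apply_eq_zero_of_strictUpper L hL (by omega)

section Jacobian

variable {k : Type*} [Field k] {n : ℕ}

theorem jacEval_sum_smul (S : Matrix (Fin n) (Fin n) k) (H : Fin n → MvPolynomial (Fin n) k)
    (x : Fin n → k) : jacEval (fun i => ∑ j, S i j • H j) x = S * jacEval H x := by
  ext i q
  simp [jacEval, mul_apply]

theorem jacEval_aeval_linear (T : Matrix (Fin n) (Fin n) k) (H : Fin n → MvPolynomial (Fin n) k)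
    (x : Fin n → k) :
    jacEval (fun i => aeval (fun m => ∑ r, T m r • (X r : MvPolynomial (Fin n) k)) (H i)) x =
      jacEval H (T *ᵥ x) * T := by
  set φ : Fin n → MvPolynomial (Fin n) k := fun m => ∑ r, T m r • X r
  have hφ_eval : (fun m => eval x (φ m)) = T *ᵥ x := by
    ext m
    simp [φ, mulVec, dotProduct]
  have hφ_pderiv : ∀ m q, pderiv q (φ m) = C (T m q) := by
    intro m q
    simp [φ, pderiv_X, Pi.single_apply, smul_eq_C_mul]
  have heval : ∀ p, eval x (aeval φ p) = eval (T *ᵥ x) p := by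
    intro p
    rw [aeval_eq_bind₁, ← hφ_eval]
    exact eval₂Hom_bind₁ _ _ _ p
  ext i q
  simp only [jacEval, of_apply, mul_apply, pderiv_aeval, map_sum, map_mul, heval, hφ_pderiv,
    eval_C]

theorem jacEval_conjMap (H : Fin n → MvPolynomial (Fin n) k) (T : Matrix (Fin n) (Fin n) k)
    (x : Fin n → k) : jacEval (conjMap H T) x = T⁻¹ * jacEval H (T *ᵥ x) * T := by
  rw [mul_assoc, ← jacEval_aeval_linear, ← jacEval_sum_smul]
  rfl

theorem jacEval_eq_conj_jacEval_conjMap (H : Fin n → MvPolynomial (Fin n) k)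
    {T : Matrix (Fin n) (Fin n) k} (hT : IsUnit T.det) (y : Fin n → k) :
    jacEval H y = T * jacEval (conjMap H T) (T⁻¹ *ᵥ y) * T⁻¹ := by
  simp [jacEval_conjMap, mulVec_mulVec, mul_nonsing_inv T hT, ← mul_assoc,
    mul_nonsing_inv_cancel_right _ _ hT]

end Jacobian

theorem linearly_triangularizable_strongly_nilpotent_general
    {k : Type*} [Field k] {n : ℕ}
    (H : Fin n → MvPolynomial (Fin n) k)
    (hT : ∃ T : Matrix (Fin n) (Fin n) k, IsUnit T.det ∧
      ∀ i j : Fin n, j ≤ i → MvPolynomial.pderiv j (conjMap H T i) = 0) :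
    ∀ X : Fin n → (Fin n → k),
      (List.ofFn fun ℓ : Fin n => jacEval H (X ℓ)).prod = 0 := by
  intro X
  obtain ⟨T, hdet, htri⟩ := hT
  have hjac : (fun ℓ => jacEval H (X ℓ)) =
      (fun A => T * A * T⁻¹) ∘ fun ℓ => jacEval (conjMap H T) (T⁻¹ *ᵥ X ℓ) :=
    funext fun ℓ => jacEval_eq_conj_jacEval_conjMap H hdet (X ℓ)
  have hstrict : ∀ A ∈ List.ofFn fun ℓ => jacEval (conjMap H T) (T⁻¹ *ᵥ X ℓ),
      ∀ i j, j ≤ i → A i j = 0 := by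
    intro A hA i j hij
    obtain ⟨ℓ, rfl⟩ := List.mem_ofFn.mp hA
    simp [jacEval, htri i j hij]
  rw [hjac, ← List.map_ofFn, list_prod_map_conj hdet,
    list_prod_eq_zero_of_strictUpper _ hstrict (List.length_ofFn).ge, mul_zero, zero_mul]

/-- If `H` has zero constant and linear part and is linearly triangularizable, i.e. there is an
invertible linear map `T` such that the Jacobian of `T⁻¹ ∘ H ∘ T` is strictly upper triangular,
then `JH` is strongly nilpotent with index at most `n`. -/
theorem linearly_triangularizable_strongly_nilpotent
    {k : Type*} [Field k] [CharZero k] {n : ℕ}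
    (H : Fin n → MvPolynomial (Fin n) k)
    (hH2 : ∀ i (β : Fin n →₀ ℕ), (β.sum fun _ m => m) < 2 → MvPolynomial.coeff β (H i) = 0)
    (hT : ∃ T : Matrix (Fin n) (Fin n) k, IsUnit T.det ∧
      ∀ i j : Fin n, j ≤ i → MvPolynomial.pderiv j (conjMap H T i) = 0) :
    ∀ X : Fin n → (Fin n → k),
      (List.ofFn fun ℓ : Fin n => jacEval H (X ℓ)).prod = 0 :=
  linearly_triangularizable_strongly_nilpotent_general H hT
end

section
/- If JH is strongly nilpotent, then its index of strong nilpotency p satisfies p ≤ n. That is, if there exists some integer q such that JH(X^{(1)})···JH(X^{(q)}) = 0 for all choices of points X^{(1)},…,X^{(q)} ∈ k^n, then already JH(X^{(1)})···JH(X^{(n)}) = 0 for all X^{(1)},…,X^{(n)} ∈ k^n. -/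
section Aux

variable {k : Type*} [Field k] {n : ℕ} {ι : Type*}

/-- The "image after one step" operator on submodules. -/
noncomputable def stepMap (A : ι → Matrix (Fin n) (Fin n) k)
    (W : Submodule k (Fin n → k)) : Submodule k (Fin n → k) :=
  ⨆ i : ι, W.map (A i).mulVecLin

lemma stepMap_mono (A : ι → Matrix (Fin n) (Fin n) k) :
    Monotone (stepMap A) := by
  intro W W' h
  exact iSup_mono fun i => Submodule.map_mono h

/-- Iterated images. -/
noncomputable def chainW (A : ι → Matrix (Fin n) (Fin n) k) (m : ℕ) :
    Submodule k (Fin n → k) :=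
  (stepMap A)^[m] ⊤

lemma chainW_zero (A : ι → Matrix (Fin n) (Fin n) k) : chainW A 0 = ⊤ := rfl

lemma chainW_succ (A : ι → Matrix (Fin n) (Fin n) k) (m : ℕ) :
    chainW A (m + 1) = stepMap A (chainW A m) := by
  unfold chainW
  rw [Function.iterate_succ_apply']

lemma chainW_antitone (A : ι → Matrix (Fin n) (Fin n) k) :
    Antitone (chainW A) := by
  apply antitone_nat_of_succ_le
  intro m
  induction m with
  | zero => exact le_top
  | succ m ih =>
      have h2 := stepMap_mono A ih
      rw [← chainW_succ A m, ← chainW_succ A (m + 1)] at h2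
      exact h2

/-- Product of the matrices along a tuple of indices. -/
noncomputable def prodMat (A : ι → Matrix (Fin n) (Fin n) k) {m : ℕ}
    (X : Fin m → ι) : Matrix (Fin n) (Fin n) k :=
  (List.ofFn fun ℓ : Fin m => A (X ℓ)).prod

lemma prodMat_cons (A : ι → Matrix (Fin n) (Fin n) k) {m : ℕ} (x : ι) (X : Fin m → ι) :
    prodMat A (Fin.cons x X) = A x * prodMat A X := by
  unfold prodMat
  rw [List.ofFn_succ]
  simp [Fin.cons_succ]

lemma range_prod_le_chainW (A : ι → Matrix (Fin n) (Fin n) k) :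
    ∀ (m : ℕ) (X : Fin m → ι),
      LinearMap.range (prodMat A X).mulVecLin ≤ chainW A m := by
  intro m
  induction m with
  | zero =>
      intro X
      exact le_top
  | succ m ih =>
      intro X
      have hX : X = Fin.cons (X 0) (fun i => X i.succ) := by
        ext i
        refine Fin.cases ?_ ?_ i <;> simp
      rw [hX, prodMat_cons, Matrix.mulVecLin_mul, LinearMap.range_comp, chainW_succ]
      refine le_trans (Submodule.map_mono (ih _)) ?_
      exact le_iSup (fun i => (chainW A m).map (A i).mulVecLin) (X 0)

lemma chainW_le_iSup_range (A : ι → Matrix (Fin n) (Fin n) k) :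
    ∀ m : ℕ, chainW A m ≤ ⨆ X : Fin m → ι, LinearMap.range (prodMat A X).mulVecLin := by
  intro m
  induction m with
  | zero =>
      have : prodMat A (fun i : Fin 0 => (Fin.elim0 i : ι)) = 1 := by
        simp [prodMat]
      refine le_trans (le_of_eq ?_) (le_iSup _ (fun i : Fin 0 => (Fin.elim0 i : ι)))
      rw [this, Matrix.mulVecLin_one, LinearMap.range_id, chainW_zero]
  | succ m ih =>
      rw [chainW_succ]
      refine le_trans (iSup_mono fun i => Submodule.map_mono ih) ?_
      refine iSup_le fun i => ?_
      rw [Submodule.map_iSup]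
      refine iSup_le fun X => ?_
      rw [← LinearMap.range_comp, ← Matrix.mulVecLin_mul, ← prodMat_cons]
      exact le_iSup (fun Y : Fin (m + 1) → ι =>
        LinearMap.range (prodMat A Y).mulVecLin) (Fin.cons i X)

lemma chainW_stab (A : ι → Matrix (Fin n) (Fin n) k) (i : ℕ)
    (h : chainW A (i + 1) = chainW A i) :
    ∀ j : ℕ, chainW A (i + j) = chainW A i := by
  intro j
  induction j with
  | zero => rfl
  | succ j ih =>
      have : i + (j + 1) = (i + j) + 1 := by ring
      rw [this, chainW_succ, ih, ← chainW_succ, h]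

/-- Main general lemma: a strongly nilpotent family of `n × n` matrices has
nilpotency index at most `n`. -/
theorem prod_eq_zero_of_strongly_nilpotent (A : ι → Matrix (Fin n) (Fin n) k)
    (q : ℕ) (hq : ∀ X : Fin q → ι, prodMat A X = 0) (X : Fin n → ι) :
    prodMat A X = 0 := by
  -- chainW A q = ⊥
  have hWq : chainW A q = ⊥ := by
    refine le_bot_iff.mp (le_trans (chainW_le_iSup_range A q) ?_)
    refine iSup_le fun Y => ?_
    rw [hq Y, Matrix.mulVecLin_zero, LinearMap.range_zero]
  -- the chain strictly decreases until it is ⊥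
  have key : ∀ i : ℕ, chainW A i = ⊥ ∨ Module.finrank k (chainW A i) ≤ n - i := by
    intro i
    induction i with
    | zero =>
        right
        have h1 : Module.finrank k (chainW A 0) ≤ Module.finrank k (Fin n → k) :=
          Submodule.finrank_le _
        simpa using h1
    | succ i ih =>
        rcases ih with h | h
        · left
          rw [chainW_succ, h]
          refine le_bot_iff.mp (iSup_le fun j => ?_)
          simp
        · by_cases heq : chainW A (i + 1) = chainW A i
          · left
            have hst := chainW_stab A i heq q
            have : chainW A (i + q) ≤ chainW A q := chainW_antitone A (Nat.le_add_left q i)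
            rw [hst, hWq] at this
            have hbot : chainW A i = ⊥ := le_bot_iff.mp this
            rw [chainW_succ, hbot]
            refine le_bot_iff.mp (iSup_le fun j => ?_)
            simp
          · right
            have hlt : chainW A (i + 1) < chainW A i :=
              lt_of_le_of_ne (chainW_antitone A (Nat.le_succ i)) heq
            have := Submodule.finrank_lt_finrank_of_lt hlt
            omega
  -- conclude: chainW A n = ⊥
  have hWn : chainW A n = ⊥ := by
    rcases key n with h | h
    · exact h
    · have h0 : Module.finrank k (chainW A n) = 0 := by omega
      exact Submodule.finrank_eq_zero.mp h0
  -- then the product kills everything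
  have hrange : LinearMap.range (prodMat A X).mulVecLin = ⊥ :=
    le_bot_iff.mp (hWn ▸ range_prod_le_chainW A n X)
  have hmv : ∀ v : Fin n → k, (prodMat A X).mulVec v = 0 := by
    intro v
    have : (prodMat A X).mulVecLin v ∈ LinearMap.range (prodMat A X).mulVecLin :=
      LinearMap.mem_range_self _ v
    rw [hrange] at this
    simpa using this
  ext i j
  have := congrFun (hmv (Pi.single j 1)) i
  rw [Matrix.mulVec_single] at this
  simpa using this

end Aux

/-- If `JH` is strongly nilpotent with some index `q`, then already the product of `n`
evaluations of `JH` at arbitrary points vanishes; i.e. the index of strong nilpotency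
is at most `n`. -/
theorem strong_nilpotency_index_le_dim
    {k : Type*} [Field k] [CharZero k] {n : ℕ}
    (H : Fin n → MvPolynomial (Fin n) k)
    (hstrong : ∃ q : ℕ, ∀ X : Fin q → (Fin n → k),
      (List.ofFn fun ℓ : Fin q => jacEval H (X ℓ)).prod = 0) :
    ∀ X : Fin n → (Fin n → k),
      (List.ofFn fun ℓ : Fin n => jacEval H (X ℓ)).prod = 0 := by
  obtain ⟨q, hq⟩ := hstrong
  intro X
  exact prod_eq_zero_of_strongly_nilpotent (jacEval H) q hq X
end

section
/- Let JH be strongly nilpotent with index p: for all points X^{(1)},…,X^{(p)} ∈ k^n, the product JH(X^{(1)})···JH(X^{(p)}) = 0. Then for any i, j ∈ {1,…,n} and any multi-indices α^{(1)},…,α^{(p)} ∈ ℤ_{≥0}^n, the coefficient identity Σ_{1 ≤ k_1,…,k_{p-1} ≤ n} ∏_{ℓ=1}^p H_{k_{ℓ-1}, α^{(ℓ)}+e_{k_ℓ}} = 0 holds, where k_0 = i, k_p = j, H_{m,β} denotes β! times the coefficient of X^β in H_m, and e_k is the k-th standard basis multi-index. -/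
/-- The coefficient `H_{i,β}`, i.e. `β!` times the coefficient of `X^β` in `H_i`, so that
`H_i = Σ_β (H_{i,β}/β!) X^β`. -/
noncomputable def coefSc {k : Type*} [Field k] {n : ℕ}
    (H : Fin n → MvPolynomial (Fin n) k) (i : Fin n) (β : Fin n →₀ ℕ) : k :=
  (β.prod fun _ m => (m.factorial : k)) * MvPolynomial.coeff β (H i)

open MvPolynomial

theorem Finsupp.eq_of_add_eq_add_of_support_separated {α M : Type*} [AddZeroClass M]
    {P : α → Prop} [DecidablePred P] {a b c d : α →₀ M} (h : a + b = c + d)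
    (ha : ∀ x ∈ a.support, P x) (hb : ∀ x ∈ b.support, ¬ P x)
    (hc : ∀ x ∈ c.support, P x) (hd : ∀ x ∈ d.support, ¬ P x) :
    a = c := by
  have filter_add_eq : ∀ u v : α →₀ M, (∀ x ∈ u.support, P x) → (∀ x ∈ v.support, ¬ P x) →
      (u + v).filter P = u := fun u v hu hv => by
    rw [filter_add, (filter_eq_self_iff _ _).mpr fun x hx => hu x (mem_support_iff.mpr hx),
      (filter_eq_zero_iff _ _).mpr fun x hx => notMem_support_iff.mp fun hx' => hv x hx' hx,
      add_zero]
  rw [← filter_add_eq a b ha hb, h, filter_add_eq c d hc hd]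

theorem Finsupp.prod_factorial_add_single {R σ : Type*} [CommSemiring R] (β : σ →₀ ℕ) (m : σ) :
    ((β + single m 1).prod fun _ x => (x.factorial : R)) =
      (β m + 1) * β.prod fun _ x => (x.factorial : R) := by
  classical
  rw [← mul_prod_erase' _ m _ (by simp), ← mul_prod_erase' β m _ (by simp), erase_add,
    erase_single, add_zero]
  simp [Nat.factorial_succ, mul_assoc]

theorem MvPolynomial.coeff_mul_of_vars_separated {R σ : Type*} [CommSemiring R]
    {P : σ → Prop} [DecidablePred P] {f g : MvPolynomial σ R} {d e : σ →₀ ℕ}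
    (hf : ∀ x ∈ f.vars, P x) (hg : ∀ x ∈ g.vars, ¬ P x)
    (hd : ∀ x ∈ d.support, P x) (he : ∀ x ∈ e.support, ¬ P x) :
    coeff (d + e) (f * g) = coeff d f * coeff e g := by
  classical
  rw [coeff_mul]
  refine Finset.sum_eq_single_of_mem (d, e) (by simp) fun q hq hne => ?_
  by_contra hz
  have hq₁ : q.1 ∈ f.support := mem_support_iff.mpr (left_ne_zero_of_mul hz)
  have hq₂ : q.2 ∈ g.support := mem_support_iff.mpr (right_ne_zero_of_mul hz)
  have hsum := Finset.HasAntidiagonal.mem_antidiagonal.mp hq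
  have h₁ : q.1 = d := Finsupp.eq_of_add_eq_add_of_support_separated hsum
    (fun x hx => hf x ((mem_vars_iff_mem_support x).mpr ⟨_, hq₁, hx⟩))
    (fun x hx => hg x ((mem_vars_iff_mem_support x).mpr ⟨_, hq₂, hx⟩)) hd he
  have h₂ : q.2 = e := add_left_cancel (h₁ ▸ hsum)
  exact hne (Prod.ext h₁ h₂)

theorem MvPolynomial.coeff_prod_rename_prodMk {R ι σ : Type*} [CommSemiring R]
    (f : ι → MvPolynomial σ R) (A : ι → σ →₀ ℕ) (s : Finset ι) :
    coeff (∑ ℓ ∈ s, (A ℓ).mapDomain (Prod.mk ℓ)) (∏ ℓ ∈ s, rename (Prod.mk ℓ) (f ℓ)) =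
      ∏ ℓ ∈ s, coeff (A ℓ) (f ℓ) := by
  classical
  induction s using Finset.induction_on with
  | empty => simp
  | @insert a s ha ih =>
    rw [Finset.sum_insert ha, Finset.prod_insert ha, Finset.prod_insert ha,
      coeff_mul_of_vars_separated (P := fun x : ι × σ => x.1 = a), ih,
      coeff_rename_mapDomain _ (Prod.mk_right_injective a)]
    · intro x hx
      obtain ⟨y, -, rfl⟩ := Finset.mem_image.mp (vars_rename _ _ hx)
      rfl
    · intro x hx
      obtain ⟨ℓ, hℓ, hx'⟩ := Finset.mem_biUnion.mp (vars_prod _ hx)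
      obtain ⟨y, -, rfl⟩ := Finset.mem_image.mp (vars_rename _ _ hx')
      exact fun h => ha (h ▸ hℓ)
    · intro x hx
      obtain ⟨y, -, rfl⟩ := Finset.mem_image.mp (Finsupp.mapDomain_support hx)
      rfl
    · intro x hx
      obtain ⟨ℓ, hℓ, hx'⟩ := Finsupp.mem_support_finsetSum _ hx
      obtain ⟨y, -, rfl⟩ := Finset.mem_image.mp (Finsupp.mapDomain_support hx')
      exact fun h => ha (h ▸ hℓ)

theorem Matrix.list_prod_ofFn_apply {R ι : Type*} [CommSemiring R] [Fintype ι] [DecidableEq ι]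
    (p : ℕ) (M : Fin p → Matrix ι ι R) (i j : ι) :
    (List.ofFn M).prod i j =
      ∑ κ : Fin (p + 1) → ι,
        if κ 0 = i ∧ κ (Fin.last p) = j then ∏ ℓ : Fin p, M ℓ (κ ℓ.castSucc) (κ ℓ.succ)
        else 0 := by
  induction p generalizing i with
  | zero =>
    rw [← (Equiv.funUnique (Fin 1) ι).symm.sum_comp]
    simp [Matrix.one_apply, Fin.last, ite_and, eq_comm]
  | succ p ih =>
    rw [List.ofFn_succ, List.prod_cons, Matrix.mul_apply,
      ← (Fin.consEquiv fun _ => ι).sum_comp, Fintype.sum_prod_type]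
    simp only [ih, Finset.mul_sum, Fin.consEquiv_apply, Fin.cons_zero, ← Fin.succ_last,
      Fin.cons_succ, Fin.prod_univ_succ, Fin.castSucc_zero, ← Fin.succ_castSucc, mul_ite, mul_zero]
    rw [Finset.sum_comm]
    simp [ite_and]

section

variable {k : Type*} [Field k] {n p : ℕ} (H : Fin n → MvPolynomial (Fin n) k)

noncomputable def genericJac (ℓ : Fin p) :
    Matrix (Fin n) (Fin n) (MvPolynomial (Fin p × Fin n) k) :=
  Matrix.of fun a b => rename (Prod.mk ℓ) (pderiv b (H a))

theorem mapMatrix_eval_genericJac (x : Fin p × Fin n → k) (ℓ : Fin p) :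
    (eval x).mapMatrix (genericJac H ℓ) = jacEval H fun v => x (ℓ, v) := by
  ext a b
  simp [genericJac, jacEval, eval_rename, Function.comp_def]

theorem list_prod_genericJac_eq_zero [Infinite k]
    (hstrong : ∀ X : Fin p → (Fin n → k), (List.ofFn fun ℓ => jacEval H (X ℓ)).prod = 0) :
    (List.ofFn (genericJac (p := p) H)).prod = 0 := by
  refine Matrix.ext fun a b => MvPolynomial.funext fun x => ?_
  have hx : (eval x).mapMatrix (List.ofFn (genericJac H)).prod = 0 := by
    rw [map_list_prod, List.map_ofFn, ← hstrong fun ℓ v => x (ℓ, v)]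
    exact congrArg _ (congrArg _ (funext (mapMatrix_eval_genericJac H x)))
  simpa using congrFun (congrFun hx a) b

theorem coefSc_add_single (i m : Fin n) (β : Fin n →₀ ℕ) :
    coefSc H i (β + Finsupp.single m 1) =
      (β.prod fun _ x => (x.factorial : k)) * coeff β (pderiv m (H i)) := by
  rw [coefSc, Finsupp.prod_factorial_add_single, coeff_pderiv]
  ring

end

theorem strong_fern_lemma_general
    {k : Type*} [Field k] [CharZero k] {n : ℕ} (p : ℕ)
    (H : Fin n → MvPolynomial (Fin n) k)
    (hstrong : ∀ X : Fin p → (Fin n → k),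
      (List.ofFn fun ℓ : Fin p => jacEval H (X ℓ)).prod = 0) :
    ∀ (i j : Fin n) (A : Fin p → (Fin n →₀ ℕ)),
      ∑ κ : Fin (p + 1) → Fin n,
        (if κ 0 = i ∧ κ (Fin.last p) = j then
          ∏ ℓ : Fin p, coefSc H (κ ℓ.castSucc) (A ℓ + Finsupp.single (κ ℓ.succ) 1)
        else 0) = 0 := by
  intro i j A
  have hchain := congrArg (coeff (∑ ℓ, (A ℓ).mapDomain (Prod.mk ℓ)))
    (congrFun (congrFun (list_prod_genericJac_eq_zero H hstrong) i) j)
  simp only [Matrix.list_prod_ofFn_apply, coeff_sum, apply_ite (coeff _), genericJac,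
    Matrix.of_apply, coeff_prod_rename_prodMk, Matrix.zero_apply, coeff_zero] at hchain
  simp only [coefSc_add_single, Finset.prod_mul_distrib, ← mul_ite_zero, ← Finset.mul_sum, hchain,
    mul_zero]

/-- The strong fern lemma: if `JH` is strongly nilpotent with index `p`, then for all
`i, j` and all multi-indices `α⁽¹⁾,…,α⁽ᵖ⁾`, the sum over chains `k₀ = i, k₁,…,k_{p-1}, k_p = j`
of the products `∏_ℓ H_{k_{ℓ-1}, α⁽ℓ⁾ + e_{k_ℓ}}` vanishes. -/
theorem strong_fern_lemma
    {k : Type*} [Field k] [CharZero k] {n : ℕ} (p : ℕ) (hp : 0 < p)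
    (H : Fin n → MvPolynomial (Fin n) k)
    (hstrong : ∀ X : Fin p → (Fin n → k),
      (List.ofFn fun ℓ : Fin p => jacEval H (X ℓ)).prod = 0) :
    ∀ (i j : Fin n) (A : Fin p → (Fin n →₀ ℕ)),
      ∑ κ : Fin (p + 1) → Fin n,
        (if κ 0 = i ∧ κ (Fin.last p) = j then
          ∏ ℓ : Fin p, coefSc H (κ ℓ.castSucc) (A ℓ + Finsupp.single (κ ℓ.succ) 1)
        else 0) = 0 :=
  strong_fern_lemma_general p H hstrong
end

section
/- Let F = X + H be a polynomial map from k^n to k^n where every monomial of each component of H has degree at least 2, and suppose JH is strongly nilpotent (with some index p). Then F is a polynomial automorphism: there exists a polynomial map F^{-1} : k^n → k^n with F ∘ F^{-1} = F^{-1} ∘ F = X. -/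
open MvPolynomial
open scoped Matrix

section UnitIntegral

variable (k : Type*) [Field k] {S : Type*} [CommRing S] [Algebra k S]

/-- The formal integral `∫₀¹ P(t) dt`, sending `t ^ m` to `1 / (m + 1)`. -/
noncomputable def unitIntegral : Polynomial S →ₗ[S] S :=
  Polynomial.lsum fun m => LinearMap.mulLeft S (algebraMap k S ((m : k) + 1)⁻¹)

variable {k}

theorem unitIntegral_monomial (m : ℕ) (a : S) :
    unitIntegral k (Polynomial.monomial m a) = algebraMap k S ((m : k) + 1)⁻¹ * a := by
  simp [unitIntegral, Polynomial.sum_monomial_index]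

theorem unitIntegral_derivative [CharZero k] (Q : Polynomial S) :
    unitIntegral k (Polynomial.derivative Q) = Q.eval 1 - Q.eval 0 := by
  induction Q using Polynomial.induction_on' with
  | add p q hp hq => simp only [map_add, hp, hq, Polynomial.eval_add]; ring
  | monomial m a =>
    cases m with
    | zero => simp
    | succ j =>
      have hj : ((j : k) + 1) ≠ 0 := by exact_mod_cast Nat.succ_ne_zero j
      rw [Polynomial.derivative_monomial, Nat.add_sub_cancel, unitIntegral_monomial]
      simp only [Polynomial.eval_monomial, one_pow, mul_one, ne_eq, Nat.add_one_ne_zero,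
        not_false_eq_true, zero_pow, mul_zero, sub_zero]
      rw [show ((j + 1 : ℕ) : S) = algebraMap k S ((j : k) + 1) by simp, mul_left_comm,
        ← map_mul, inv_mul_cancel₀ hj, map_one, mul_one]

theorem unitIntegral_map {S' : Type*} [CommRing S'] [Algebra k S'] (ψ : S →ₐ[k] S')
    (P : Polynomial S) : unitIntegral k (P.map (ψ : S →+* S')) = ψ (unitIntegral k P) := by
  induction P using Polynomial.induction_on' with
  | add p q hp hq => simp only [Polynomial.map_add, map_add, hp, hq]
  | monomial m a =>
    simp only [Polynomial.map_monomial, unitIntegral_monomial, map_mul, AlgHom.commutes,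
      RingHom.coe_coe]

theorem unitIntegral_C_mul_mul_C (a b : S) (P : Polynomial S) :
    unitIntegral k (Polynomial.C a * P * Polynomial.C b) = a * unitIntegral k P * b := by
  rw [mul_comm, ← mul_assoc, ← map_mul, Polynomial.C_mul', map_smul, smul_eq_mul]
  ring

theorem unitIntegral_matrix_C_mul_mul_C {ι : Type*} [Fintype ι] (E A : Matrix ι ι S)
    (N : Matrix ι ι (Polynomial S)) :
    (E.map Polynomial.C * N * A.map Polynomial.C).map (unitIntegral k)
      = E * N.map (unitIntegral k) * A := by
  ext i j
  simp only [Matrix.map_apply, Matrix.mul_apply, Finset.sum_mul, map_sum,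
    unitIntegral_C_mul_mul_C]

end UnitIntegral

theorem derivative_aeval_eq_sum_pderiv {R S σ : Type*} [CommRing R] [CommRing S] [Algebra R S]
    [Fintype σ] (g : σ → Polynomial S) (q : MvPolynomial σ R) :
    Polynomial.derivative (aeval g q)
      = ∑ j, aeval g (pderiv j q) * Polynomial.derivative (g j) := by
  classical
  induction q using MvPolynomial.induction_on with
  | C a => simp [Polynomial.algebraMap_apply]
  | add q r hq hr => simp only [map_add, hq, hr, add_mul, Finset.sum_add_distrib]
  | mul_X q i hq =>
    simp only [map_mul, aeval_X, Polynomial.derivative_mul, hq, Derivation.leibniz, pderiv_X,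
      smul_eq_mul, map_add, Pi.single_apply, add_mul, Finset.sum_add_distrib, Finset.sum_mul]
    simp only [apply_ite (aeval g), map_one, map_zero, mul_ite, ite_mul, mul_one, mul_zero,
      zero_mul, Finset.sum_ite_eq, Finset.mem_univ, if_true]
    rw [add_comm]
    exact congrArg _ (Finset.sum_congr rfl fun j _ => by ring)

section Jacobian

variable {k : Type*} [Field k] {n : ℕ} (H : Fin n → MvPolynomial (Fin n) k)

def IsStronglyNilpotentJac (p : ℕ) : Prop :=
  ∀ X : Fin p → (Fin n → k), (List.ofFn fun ℓ : Fin p => jacEval H (X ℓ)).prod = 0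

noncomputable def jacAeval {S : Type*} [CommRing S] [Algebra k S] (x : Fin n → S) :
    Matrix (Fin n) (Fin n) S :=
  Matrix.of fun i j => aeval x (pderiv j (H i))

theorem jacAeval_eq_jacEval (x : Fin n → k) : jacAeval H x = jacEval H x := by
  ext i j
  simp [jacAeval, jacEval]

variable {S S' : Type*} [CommRing S] [Algebra k S] [CommRing S'] [Algebra k S']

theorem jacAeval_map (ψ : S →ₐ[k] S') (x : Fin n → S) :
    (jacAeval H x).map ψ = jacAeval H (ψ ∘ x) := by
  ext i j
  exact comp_aeval_apply x ψ _

theorem list_prod_jacAeval_map (ψ : S →ₐ[k] S') (vs : List (Fin n → S)) :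
    (vs.map (jacAeval H)).prod.map ψ = (vs.map fun v => jacAeval H (ψ ∘ v)).prod := by
  rw [← AlgHom.mapMatrix_apply, map_list_prod, List.map_map]
  simp only [Function.comp_def, AlgHom.mapMatrix_apply, jacAeval_map]

/-- The product vanishes at the generic points `X (ℓ, j)` because it vanishes at every point of
the infinite field `k`, and it specialises to any points. -/
theorem list_prod_jacAeval_eq_zero [CharZero k] {p : ℕ} (hH : IsStronglyNilpotentJac H p)
    (vs : List (Fin n → S)) (hvs : vs.length = p) : (vs.map (jacAeval H)).prod = 0 := by
  subst hvs
  let u : List (Fin n → MvPolynomial (Fin vs.length × Fin n) k) :=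
    List.ofFn fun ℓ j => X (ℓ, j)
  have huniv : (u.map (jacAeval H)).prod = 0 := by
    refine Matrix.ext fun i j => MvPolynomial.funext (R := k) fun c => ?_
    have hc := congrFun₂ (list_prod_jacAeval_map H (aeval c) u) i j
    rw [Matrix.map_apply, aeval_eq_eval] at hc
    rw [hc, Matrix.zero_apply, map_zero]
    simpa [u, List.map_ofFn, Function.comp_def, jacAeval_eq_jacEval] using
      congrFun₂ (hH _) i j
  have hx := list_prod_jacAeval_map H (aeval fun q : Fin vs.length × Fin n => vs.get q.1 q.2) u
  rw [huniv, Matrix.map_zero _ (map_zero _)] at hx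
  simpa [u, List.map_ofFn, Function.comp_def] using hx.symm

/-- The average `∫₀¹ JH(z(t)) dt` of the Jacobian along the polynomial path `z`. -/
noncomputable def avgJac (z : Fin n → Polynomial S) : Matrix (Fin n) (Fin n) S :=
  (jacAeval H z).map (unitIntegral k)

theorem avgJac_map (ψ : S →ₐ[k] S') (z : Fin n → Polynomial S) :
    avgJac H (fun j => (z j).map (ψ : S →+* S')) = (avgJac H z).map ψ := by
  ext i j
  simp only [avgJac, jacAeval, Matrix.map_apply, Matrix.of_apply, ← unitIntegral_map]
  exact congrArg _ (comp_aeval_apply z (Polynomial.mapAlgHom ψ) _).symm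

noncomputable def linePath (x y : Fin n → S) : Fin n → Polynomial S :=
  fun j => Polynomial.C (x j) + Polynomial.X * Polynomial.C (y j - x j)

theorem eval_aeval_linePath (x y : Fin n → S) (c : S) (P : MvPolynomial (Fin n) k) :
    (aeval (linePath x y) P).eval c = aeval (x + c • (y - x)) P := by
  rw [← Polynomial.coe_aeval_eq_eval, ← AlgHom.coe_restrictScalars' k, comp_aeval_apply]
  congr 1
  ext j
  simp [linePath]

theorem aeval_sub_aeval_eq_avgJac_mulVec [CharZero k] (x y : Fin n → S) :
    (fun i => aeval y (H i) - aeval x (H i)) = avgJac H (linePath x y) *ᵥ (y - x) := by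
  ext i
  have hderiv : Polynomial.derivative (aeval (linePath x y) (H i))
      = ∑ j, Polynomial.C (y j - x j) * aeval (linePath x y) (pderiv j (H i)) := by
    rw [derivative_aeval_eq_sum_pderiv]
    exact Finset.sum_congr rfl fun j _ => by simp [linePath, mul_comm]
  have hint := unitIntegral_derivative (k := k) (aeval (linePath x y) (H i))
  rw [eval_aeval_linePath, eval_aeval_linePath, one_smul, zero_smul, add_zero,
    add_sub_cancel, hderiv, map_sum] at hint
  simp only [← hint, ← Polynomial.smul_eq_C_mul, map_smul, smul_eq_mul, Matrix.mulVec,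
    dotProduct, avgJac, jacAeval, Matrix.map_apply, Matrix.of_apply, Pi.sub_apply]
  exact Finset.sum_congr rfl fun j _ => mul_comm _ _

/-- Over `S[t]` the path `z` is a single point; integrating in `t` the identity given by the
induction hypothesis trades its Jacobian for the averaged one. -/
theorem list_prod_jacAeval_mul_list_prod_avgJac_eq_zero [CharZero k] {p : ℕ}
    (hH : IsStronglyNilpotentJac H p) (vs : List (Fin n → S)) (zs : List (Fin n → Polynomial S))
    (hlen : vs.length + zs.length = p) :
    (vs.map (jacAeval H)).prod * (zs.map (avgJac H)).prod = 0 := by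
  obtain ⟨m, hm⟩ : ∃ m, zs.length = m := ⟨_, rfl⟩
  induction m generalizing S with
  | zero =>
    rw [List.length_eq_zero_iff.mp hm, List.map_nil, List.prod_nil, mul_one]
    exact list_prod_jacAeval_eq_zero H hH vs (by simpa [hm] using hlen)
  | succ m ih =>
    obtain ⟨z, zs, rfl⟩ := List.exists_cons_of_length_eq_add_one hm
    let c : S →ₐ[k] Polynomial S := Polynomial.CAlgHom
    have key := ih (vs.map (c ∘ ·) ++ [z]) (zs.map fun w j => (w j).map (c : S →+* Polynomial S))
      (by simp only [List.length_append, List.length_map, List.length_cons,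
            List.length_nil] at hlen ⊢
          omega)
      (by simpa using hm)
    have hE : ((vs.map (c ∘ ·)).map (jacAeval H)).prod
        = (vs.map (jacAeval H)).prod.map Polynomial.C := by
      rw [List.map_map]
      exact (list_prod_jacAeval_map H c vs).symm
    have hA : ((zs.map fun w j => (w j).map (c : S →+* Polynomial S)).map (avgJac H)).prod
        = (zs.map (avgJac H)).prod.map Polynomial.C := by
      change _ = Matrix.map _ c
      rw [← AlgHom.mapMatrix_apply, map_list_prod, List.map_map, List.map_map]
      simp only [Function.comp_def, avgJac_map, AlgHom.mapMatrix_apply]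
    rw [List.map_append, List.prod_append, List.map_singleton, List.prod_singleton, hE, hA] at key
    have hint := congrArg (Matrix.map · (unitIntegral k)) key
    simp only [unitIntegral_matrix_C_mul_mul_C] at hint
    rwa [Matrix.map_zero _ (map_zero _), mul_assoc] at hint

theorem list_prod_avgJac_eq_zero [CharZero k] {p : ℕ} (hH : IsStronglyNilpotentJac H p)
    (zs : List (Fin n → Polynomial S)) (hzs : zs.length = p) : (zs.map (avgJac H)).prod = 0 := by
  simpa using list_prod_jacAeval_mul_list_prod_avgJac_eq_zero H hH [] zs (by simp [hzs])

theorem eq_zero_of_succ_eq_neg_avgJac_mulVec [CharZero k] {p : ℕ}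
    (hH : IsStronglyNilpotentJac H p) (d : ℕ → Fin n → S)
    (hd : ∀ m, ∃ z, d (m + 1) = -(avgJac H z *ᵥ d m)) : d p = 0 := by
  have hprod : ∀ m, ∃ zs : List (Fin n → Polynomial S),
      zs.length = m ∧ d m = (-1 : S) ^ m • ((zs.map (avgJac H)).prod *ᵥ d 0) := by
    intro m
    induction m with
    | zero => exact ⟨[], rfl, by simp⟩
    | succ m ih =>
      obtain ⟨zs, hlen, hdm⟩ := ih
      obtain ⟨z, hz⟩ := hd m
      refine ⟨z :: zs, by simp [hlen], ?_⟩
      rw [hz, hdm, Matrix.mulVec_smul, Matrix.mulVec_mulVec, List.map_cons, List.prod_cons,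
        pow_succ, mul_neg_one, neg_smul]
  obtain ⟨zs, hlen, hdp⟩ := hprod p
  rw [hdp, list_prod_avgJac_eq_zero H hH zs hlen, Matrix.zero_mulVec, smul_zero]

theorem eq_of_add_aeval_eq [CharZero k] {p : ℕ} (hH : IsStronglyNilpotentJac H p)
    (x y : Fin n → S) (h : ∀ i, x i + aeval x (H i) = y i + aeval y (H i)) : x = y := by
  have hd : y - x = -(avgJac H (linePath x y) *ᵥ (y - x)) := by
    rw [← aeval_sub_aeval_eq_avgJac_mulVec]
    funext i
    simp only [Pi.sub_apply, Pi.neg_apply]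
    linear_combination -h i
  exact (sub_eq_zero.mp <| eq_zero_of_succ_eq_neg_avgJac_mulVec H hH (fun _ => y - x)
    fun _ => ⟨_, hd⟩).symm

end Jacobian

section Picard

variable {k : Type*} [Field k] {n : ℕ} (H : Fin n → MvPolynomial (Fin n) k)

noncomputable def picardIter : ℕ → Fin n → MvPolynomial (Fin n) k
  | 0 => X
  | m + 1 => fun i => X i - aeval (picardIter m) (H i)

variable [CharZero k] {p : ℕ} (hH : IsStronglyNilpotentJac H p)
include hH

theorem picardIter_succ : picardIter H (p + 1) = picardIter H p := by
  refine sub_eq_zero.mp <| eq_zero_of_succ_eq_neg_avgJac_mulVec H hH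
    (fun m => picardIter H (m + 1) - picardIter H m)
    fun m => ⟨linePath (picardIter H m) (picardIter H (m + 1)), ?_⟩
  rw [← aeval_sub_aeval_eq_avgJac_mulVec]
  funext i
  simp only [picardIter, Pi.sub_apply, Pi.neg_apply]
  ring

theorem aeval_picardIter_X_add (i : Fin n) : aeval (picardIter H p) (X i + H i) = X i := by
  have h := congrFun (picardIter_succ H hH) i
  rw [picardIter] at h
  rw [map_add, aeval_X]
  linear_combination -h

end Picard

theorem strongly_nilpotent_is_automorphism_general
    {k : Type*} [Field k] [CharZero k] {n : ℕ} (p : ℕ)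
    (H : Fin n → MvPolynomial (Fin n) k)
    (hstrong : ∀ X : Fin p → (Fin n → k),
      (List.ofFn fun ℓ : Fin p => jacEval H (X ℓ)).prod = 0) :
    ∃ Finv : Fin n → MvPolynomial (Fin n) k,
      (∀ i, MvPolynomial.aeval Finv (MvPolynomial.X i + H i) = MvPolynomial.X i) ∧
      (∀ i, MvPolynomial.aeval (fun j => MvPolynomial.X j + H j) (Finv i)
        = MvPolynomial.X i) := by
  set G := picardIter H p
  set F : Fin n → MvPolynomial (Fin n) k := fun j => X j + H j
  have hFG : ∀ i, aeval G (F i) = X i := aeval_picardIter_X_add H hstrong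
  refine ⟨G, hFG, fun i => congrFun (eq_of_add_aeval_eq H hstrong (fun j => aeval F (G j)) X
    fun i => ?_) i⟩
  calc aeval F (G i) + aeval (fun j => aeval F (G j)) (H i)
      = aeval F (aeval G (F i)) := by rw [comp_aeval_apply, map_add, aeval_X]
    _ = X i + aeval X (H i) := by rw [hFG, aeval_X, aeval_X_left_apply]

/-- If `F = X + H` where every monomial of `H` has degree at least two and `JH` is strongly
nilpotent (with some index `p`), then `F` is a polynomial automorphism: there is a polynomial
map `Finv` with `F ∘ Finv = Finv ∘ F = X`. -/
theorem strongly_nilpotent_is_automorphism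
    {k : Type*} [Field k] [CharZero k] {n : ℕ} (p : ℕ)
    (H : Fin n → MvPolynomial (Fin n) k)
    (hH2 : ∀ i (β : Fin n →₀ ℕ), (β.sum fun _ m => m) < 2 → MvPolynomial.coeff β (H i) = 0)
    (hstrong : ∀ X : Fin p → (Fin n → k),
      (List.ofFn fun ℓ : Fin p => jacEval H (X ℓ)).prod = 0) :
    ∃ Finv : Fin n → MvPolynomial (Fin n) k,
      (∀ i, MvPolynomial.aeval Finv (MvPolynomial.X i + H i) = MvPolynomial.X i) ∧
      (∀ i, MvPolynomial.aeval (fun j => MvPolynomial.X j + H j) (Finv i)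
        = MvPolynomial.X i) :=
  strongly_nilpotent_is_automorphism_general p H hstrong
end

section
/- Let F = X + H be a polynomial map from k^n to k^n where every monomial of each component of H has degree at least 2, and suppose JH is strongly nilpotent with index p. Then F is a polynomial automorphism and the degree of its inverse satisfies deg(F^{-1}) ≤ deg(F)^{p−1}. -/
/-- The degree of a polynomial map: the maximum of the total degrees of its components. -/
noncomputable def mapDeg {k : Type*} [Field k] {n : ℕ}
    (F : Fin n → MvPolynomial (Fin n) k) : ℕ :=
  Finset.univ.sup fun i => (F i).totalDegree

namespace MvPolynomial

variable {σ : Type*}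

theorem derivative_aeval {R : Type*} [CommRing R] [Fintype σ] (g : σ → Polynomial R)
    (q : MvPolynomial σ R) :
    Polynomial.derivative (aeval g q) =
      ∑ j, aeval g (pderiv j q) * Polynomial.derivative (g j) := by
  classical
  induction q using MvPolynomial.induction_on with
  | C c => simp
  | add p q hp hq => simp only [map_add, hp, hq, add_mul, Finset.sum_add_distrib]
  | mul_X p j hp =>
    simp only [map_mul, aeval_X, Polynomial.derivative_mul, hp, Derivation.leibniz, pderiv_X,
      Pi.single_apply, smul_eq_mul, map_add, add_mul, Finset.sum_add_distrib, Finset.sum_mul,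
      apply_ite (aeval g), map_zero, mul_ite, ite_mul, mul_one, mul_zero, zero_mul,
      Finset.sum_ite_eq, Finset.mem_univ, if_true]
    rw [add_comm]
    exact congrArg _ (Finset.sum_congr rfl fun _ _ => by ring)

theorem eval_aeval {R : Type*} [CommSemiring R] {τ : Type*} (x : τ → R) (Q : σ → MvPolynomial τ R)
    (q : MvPolynomial σ R) :
    eval x (aeval Q q) = eval (fun j => eval x (Q j)) q :=
  comp_aeval_apply (f := Q) (aeval x) q

theorem eval_aeval_eq_eval_add_smul {k : Type*} [Field k] (a w : σ → k) (t : k)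
    (q : MvPolynomial σ k) :
    Polynomial.eval t (aeval (fun j => Polynomial.C (a j) + Polynomial.C (w j) * Polynomial.X) q) =
      eval (a + t • w) q := by
  rw [← Polynomial.coe_aeval_eq_eval, comp_aeval_apply, ← aeval_eq_eval]
  congr 2
  funext j
  simp only [map_add, map_mul, Polynomial.aeval_C, Polynomial.aeval_X, Pi.add_apply,
    Pi.smul_apply, smul_eq_mul, Algebra.algebraMap_self, RingHom.id_apply]
  ring

theorem eval_add_eq_of_forall_sum_mul_pderiv_eq_zero {k : Type*} [Field k] [CharZero k]
    [Fintype σ] (P : MvPolynomial σ k) (a w : σ → k)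
    (h : ∀ t : k, ∑ j, w j * eval (a + t • w) (pderiv j P) = 0) :
    eval (a + w) P = eval a P := by
  set f := aeval (fun j => Polynomial.C (a j) + Polynomial.C (w j) * Polynomial.X) P
  have hf : Polynomial.derivative f = 0 := Polynomial.funext fun t => by
    simp only [f, derivative_aeval, Polynomial.eval_finsetSum, Polynomial.eval_mul,
      eval_aeval_eq_eval_add_smul, Polynomial.derivative_add, Polynomial.derivative_C,
      Polynomial.derivative_C_mul_X, zero_add, Polynomial.eval_C, Polynomial.eval_zero]
    simpa only [mul_comm] using h t
  have hconst := Polynomial.eq_C_of_derivative_eq_zero hf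
  have h1 := congrArg (Polynomial.eval 1) hconst
  have h0 := congrArg (Polynomial.eval 0) hconst
  simp only [f, eval_aeval_eq_eval_add_smul, Polynomial.eval_C, one_smul, zero_smul,
    add_zero] at h1 h0
  rw [h1, h0]

theorem totalDegree_aeval_le {R : Type*} [CommSemiring R] {τ : Type*} (Q : σ → MvPolynomial τ R)
    (q : MvPolynomial σ R) {D : ℕ} (hQ : ∀ j, (Q j).totalDegree ≤ D) :
    (aeval Q q).totalDegree ≤ q.totalDegree * D := by
  conv_lhs => rw [q.as_sum, map_sum]
  refine (totalDegree_finsetSum _ _).trans (Finset.sup_le fun v hv => ?_)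
  rw [aeval_monomial, Algebra.algebraMap_eq_smul_one, smul_mul_assoc, one_mul]
  grw [totalDegree_smul_le, ← le_totalDegree hv, Finsupp.sum, Finset.sum_mul, Finsupp.prod,
    totalDegree_finsetProd]
  exact Finset.sum_le_sum fun j _ => (totalDegree_pow _ _).trans (Nat.mul_le_mul_left _ (hQ j))

section

variable {R : Type*} [CommRing R] [Nontrivial R] {i : σ} {q : MvPolynomial σ R}

theorem one_le_totalDegree_X_add (hq : coeff (Finsupp.single i 1) q = 0) :
    1 ≤ (X i + q).totalDegree := by
  have hmem : Finsupp.single i 1 ∈ (X i + q).support := by simp [hq]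
  simpa using le_totalDegree hmem

theorem totalDegree_le_of_totalDegree_X_add_le {D : ℕ} (hD : 1 ≤ D)
    (h : (X i + q).totalDegree ≤ D) : q.totalDegree ≤ D := by
  rw [show q = (X i + q) - X i by ring]
  exact (totalDegree_sub _ _).trans (max_le h (by rwa [totalDegree_X]))

end

end MvPolynomial

open MvPolynomial Matrix

section

variable {R : Type*} [CommSemiring R]

noncomputable def evalMap {σ τ : Type*} (F : σ → MvPolynomial τ R) (x : τ → R) : σ → R :=
  fun i => eval x (F i)

@[simp]
theorem evalMap_X {σ : Type*} (x : σ → R) : evalMap X x = x :=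
  funext fun i => eval_X i

theorem evalMap_X_add {σ : Type*} (H : σ → MvPolynomial σ R) (x : σ → R) :
    evalMap (fun i => X i + H i) x = x + evalMap H x :=
  funext fun i => by simp [evalMap]

theorem evalMap_aeval {σ τ υ : Type*} (F : σ → MvPolynomial τ R) (Q : τ → MvPolynomial υ R)
    (x : υ → R) : evalMap (fun i => aeval Q (F i)) x = evalMap F (evalMap Q x) :=
  funext fun i => eval_aeval x Q (F i)

end

theorem aeval_eq_X_of_aeval_eq_X_of_injective {k σ : Type*} [Field k] [Infinite k]
    {F G : σ → MvPolynomial σ k} (hFG : ∀ i, aeval G (F i) = X i)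
    (hinj : Function.Injective (evalMap F)) (i : σ) : aeval F (G i) = X i := by
  have hGF : ∀ x, evalMap G (evalMap F x) = x := fun x => hinj <| by
    rw [← evalMap_aeval, funext hFG, evalMap_X]
  exact MvPolynomial.funext fun x => by
    rw [eval_aeval, eval_X]
    exact congrFun (hGF x) i

theorem totalDegree_le_mapDeg {k : Type*} [Field k] {n : ℕ} (F : Fin n → MvPolynomial (Fin n) k)
    (i : Fin n) : (F i).totalDegree ≤ mapDeg F :=
  Finset.le_sup (f := fun i => (F i).totalDegree) (Finset.mem_univ i)

section

variable {k : Type*} [Field k] {n : ℕ} (H : Fin n → MvPolynomial (Fin n) k)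

noncomputable def jacImageSpan (m : ℕ) : Submodule k (Fin n → k) :=
  Submodule.span k { v | ∃ (x : Fin m → Fin n → k) (u : Fin n → k),
    v = (List.ofFn fun ℓ => jacEval H (x ℓ)).prod *ᵥ u }

theorem jacImageSpan_zero : jacImageSpan H 0 = ⊤ :=
  eq_top_iff.2 fun v _ => Submodule.subset_span ⟨Fin.elim0, v, by simp⟩

theorem jacEval_mulVec_mem_jacImageSpan_succ {m : ℕ} (x : Fin n → k) {w : Fin n → k}
    (hw : w ∈ jacImageSpan H m) : jacEval H x *ᵥ w ∈ jacImageSpan H (m + 1) := by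
  induction hw using Submodule.span_induction with
  | mem v hv =>
    obtain ⟨xs, u, rfl⟩ := hv
    refine Submodule.subset_span ⟨Fin.cons x xs, u, ?_⟩
    simp [mulVec_mulVec, List.ofFn_succ]
  | zero => simp
  | add u v _ _ hu hv => rw [mulVec_add]; exact add_mem hu hv
  | smul c u _ hu => rw [mulVec_smul]; exact Submodule.smul_mem _ c hu

theorem jacImageSpan_succ_le (m : ℕ) : jacImageSpan H (m + 1) ≤ jacImageSpan H m := by
  refine Submodule.span_le.2 ?_
  rintro v ⟨x, u, rfl⟩
  refine Submodule.subset_span ⟨Fin.init x, jacEval H (x (Fin.last m)) *ᵥ u, ?_⟩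
  rw [List.ofFn_succ', List.prod_concat, ← mulVec_mulVec]
  rfl

theorem jacImageSpan_eq_bot {p : ℕ}
    (hstrong : ∀ x : Fin p → Fin n → k, (List.ofFn fun ℓ => jacEval H (x ℓ)).prod = 0)
    {m : ℕ} (hm : p ≤ m) : jacImageSpan H m = ⊥ := by
  have hp : jacImageSpan H p = ⊥ := by
    refine eq_bot_iff.2 (Submodule.span_le.2 ?_)
    rintro v ⟨x, u, rfl⟩
    simp [hstrong x]
  exact eq_bot_iff.2 <| (antitone_nat_of_succ_le (jacImageSpan_succ_le H) hm).trans hp.le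

theorem evalMap_add_sub_evalMap_mem [CharZero k] {m : ℕ} (a : Fin n → k) {w : Fin n → k}
    (hw : w ∈ jacImageSpan H m) : evalMap H (a + w) - evalMap H a ∈ jacImageSpan H (m + 1) := by
  rw [← Subspace.forall_mem_dualAnnihilator_apply_eq_zero_iff]
  intro φ hφ
  rw [Submodule.mem_dualAnnihilator] at hφ
  -- `P` is `φ ∘ H`, written as a polynomial.
  set c : Fin n → k := fun i => φ fun j => if i = j then 1 else 0
  set P := ∑ i, c i • H i
  have hP : ∀ x, eval x P = φ (evalMap H x) := fun x => by
    simp [P, LinearMap.pi_apply_eq_sum_univ φ (evalMap H x), evalMap, c, mul_comm]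
  have hJ : ∀ x, ∑ j, w j * eval x (pderiv j P) = φ (jacEval H x *ᵥ w) := fun x => by
    rw [LinearMap.pi_apply_eq_sum_univ φ]
    simp only [P, map_sum, Derivation.map_smul, smul_eval, Finset.mul_sum, mulVec, dotProduct,
      jacEval, of_apply, smul_eq_mul, Finset.sum_mul]
    rw [Finset.sum_comm]
    exact Finset.sum_congr rfl fun _ _ => Finset.sum_congr rfl fun _ _ => by ring
  rw [map_sub, ← hP, ← hP, sub_eq_zero]
  exact eval_add_eq_of_forall_sum_mul_pderiv_eq_zero P a w fun t =>
    (hJ _).trans (hφ _ (jacEval_mulVec_mem_jacImageSpan_succ H _ hw))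

theorem evalMap_X_add_injective [CharZero k] {m : ℕ} (hS : jacImageSpan H m = ⊥) :
    Function.Injective (evalMap fun i => X i + H i) := by
  intro a b hab
  rw [evalMap_X_add, evalMap_X_add] at hab
  have hdiff : ∀ l, a - b ∈ jacImageSpan H l := by
    intro l
    induction l with
    | zero => simp [jacImageSpan_zero]
    | succ l ih =>
      have hmem := evalMap_add_sub_evalMap_mem H b ih
      rw [add_sub_cancel] at hmem
      have hab' : a - b = -(evalMap H a - evalMap H b) := by
        rw [neg_sub, sub_eq_sub_iff_add_eq_add, add_comm (evalMap H b), hab]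
      exact hab' ▸ neg_mem hmem
  simpa [hS, sub_eq_zero] using hdiff m

noncomputable def inverseApprox : ℕ → Fin n → MvPolynomial (Fin n) k
  | 0 => X
  | m + 1 => fun i => X i - aeval (inverseApprox m) (H i)

theorem evalMap_inverseApprox_succ (m : ℕ) (x : Fin n → k) :
    evalMap (inverseApprox H (m + 1)) x = x - evalMap H (evalMap (inverseApprox H m) x) :=
  funext fun i => by
    simp only [inverseApprox, evalMap, map_sub, eval_X, eval_aeval, Pi.sub_apply]
    rfl

theorem evalMap_inverseApprox_succ_sub_mem [CharZero k] (hH0 : evalMap H 0 = 0) (x : Fin n → k)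
    (m : ℕ) :
    evalMap (inverseApprox H (m + 1)) x - evalMap (inverseApprox H m) x ∈
      jacImageSpan H (m + 1) := by
  induction m with
  | zero =>
    have hx : x ∈ jacImageSpan H 0 := by simp [jacImageSpan_zero]
    have hmem := evalMap_add_sub_evalMap_mem H 0 hx
    rw [zero_add x, hH0, sub_zero] at hmem
    rw [evalMap_inverseApprox_succ, inverseApprox, evalMap_X, sub_sub_cancel_left]
    exact neg_mem hmem
  | succ m ih =>
    have hmem := evalMap_add_sub_evalMap_mem H (evalMap (inverseApprox H m) x) ih
    rw [add_sub_cancel] at hmem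
    convert neg_mem hmem using 1
    linear_combination
      evalMap_inverseApprox_succ H (m + 1) x - evalMap_inverseApprox_succ H m x

theorem inverseApprox_succ_eq_of_eq_bot [CharZero k] (hH0 : evalMap H 0 = 0) {m : ℕ}
    (hS : jacImageSpan H (m + 1) = ⊥) : inverseApprox H (m + 1) = inverseApprox H m :=
  funext fun i => MvPolynomial.funext fun x => by
    have hmem := evalMap_inverseApprox_succ_sub_mem H hH0 x m
    rw [hS, Submodule.mem_bot, sub_eq_zero] at hmem
    exact congrFun hmem i

theorem aeval_inverseApprox_X_add {m : ℕ} (h : inverseApprox H (m + 1) = inverseApprox H m)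
    (i : Fin n) : aeval (inverseApprox H m) (X i + H i) = X i := by
  have hi : inverseApprox H m i = X i - aeval (inverseApprox H m) (H i) := (congrFun h i).symm
  rw [map_add, aeval_X, hi]
  ring

theorem totalDegree_inverseApprox_le {D : ℕ} (hD : 1 ≤ D) (hH : ∀ i, (H i).totalDegree ≤ D)
    (m : ℕ) (i : Fin n) : (inverseApprox H m i).totalDegree ≤ D ^ m := by
  induction m generalizing i with
  | zero => simp [inverseApprox]
  | succ m ih =>
    refine (totalDegree_sub _ _).trans (max_le ?_ ?_)
    · rw [totalDegree_X]
      exact Nat.one_le_pow _ _ hD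
    · grw [totalDegree_aeval_le _ _ ih, hH i, pow_succ']

end

/-- Main theorem: if `F = X + H` where every monomial of `H` has degree at least two and `JH`
is strongly nilpotent with index `p`, then `F` is a polynomial automorphism and
`deg(F⁻¹) ≤ deg(F)^(p-1)`. -/
theorem degree_bound_strongly_nilpotent
    {k : Type*} [Field k] [CharZero k] {n : ℕ} (p : ℕ)
    (H : Fin n → MvPolynomial (Fin n) k)
    (hH2 : ∀ i (β : Fin n →₀ ℕ), (β.sum fun _ m => m) < 2 → MvPolynomial.coeff β (H i) = 0)
    (hstrong : ∀ X : Fin p → (Fin n → k),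
      (List.ofFn fun ℓ : Fin p => jacEval H (X ℓ)).prod = 0) :
    ∃ Finv : Fin n → MvPolynomial (Fin n) k,
      (∀ i, MvPolynomial.aeval Finv (MvPolynomial.X i + H i) = MvPolynomial.X i) ∧
      (∀ i, MvPolynomial.aeval (fun j => MvPolynomial.X j + H j) (Finv i)
        = MvPolynomial.X i) ∧
      mapDeg Finv ≤ (mapDeg fun i => MvPolynomial.X i + H i) ^ (p - 1) := by
  have hbot : jacImageSpan H (p - 1 + 1) = ⊥ := jacImageSpan_eq_bot H hstrong (by omega)
  have hH0 : evalMap H 0 = 0 := funext fun i => by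
    simpa [evalMap, eval_zero, constantCoeff_eq] using hH2 i 0 (by simp)
  have hright := aeval_inverseApprox_X_add H (inverseApprox_succ_eq_of_eq_bot H hH0 hbot)
  have hF : ∀ i, (X i + H i).totalDegree ≤ mapDeg fun i => X i + H i :=
    totalDegree_le_mapDeg fun i => X i + H i
  have hdeg : ∀ i, 1 ≤ mapDeg fun i => X i + H i := fun i =>
    (one_le_totalDegree_X_add (hH2 i _ (by simp))).trans (hF i)
  refine ⟨inverseApprox H (p - 1), hright,
    aeval_eq_X_of_aeval_eq_X_of_injective hright (evalMap_X_add_injective H hbot), ?_⟩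
  exact Finset.sup_le fun i _ => totalDegree_inverseApprox_le H (hdeg i)
    (fun j => totalDegree_le_of_totalDegree_X_add_le (hdeg i) (hF j)) _ i
end

section
/- Let F = X + H be a polynomial map on k^n with H homogeneous of degree d ≥ 2 and det(I + JH) = 1 identically. Then JH is nilpotent: JH(X)^n = 0 for every X ∈ k^n. -/
/-!
By homogeneity, `JH(c • x) = c ^ (d - 1) • JH(x)`, so the Keller condition evaluated along the
line through `x` says `det (1 + c ^ (d - 1) • JH(x)) = 1` for all `c`. Over an infinite field this
forces the reverse characteristic polynomial `det (1 + t • JH(x))` of `-JH(x)` to be `1`, hence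
its characteristic polynomial is `X ^ n`, and Cayley–Hamilton gives `JH(x) ^ n = 0`.
-/

/-- The Jacobian matrix of the polynomial map `H : k^n → k^n`, as a matrix of polynomials. -/
noncomputable def jacMat {k : Type*} [Field k] {n : ℕ}
    (H : Fin n → MvPolynomial (Fin n) k) : Matrix (Fin n) (Fin n) (MvPolynomial (Fin n) k) :=
  Matrix.of fun i j => MvPolynomial.pderiv j (H i)

namespace MvPolynomial

theorem IsHomogeneous.eval_smul {R σ : Type*} [CommSemiring R] {φ : MvPolynomial σ R} {d : ℕ}
    (hφ : φ.IsHomogeneous d) (c : R) (x : σ → R) :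
    eval (c • x) φ = c ^ d * eval x φ := by
  rw [eval_eq, eval_eq, Finset.mul_sum]
  refine Finset.sum_congr rfl fun m hm => ?_
  have hdeg : ∑ i ∈ m.support, m i = d := by
    simpa [Finsupp.weight_apply, Finsupp.sum] using hφ (mem_support_iff.mp hm)
  simp_rw [Pi.smul_apply, smul_eq_mul, mul_pow, Finset.prod_mul_distrib,
    Finset.prod_pow_eq_pow_sum, hdeg]
  ring

end MvPolynomial

namespace Matrix

variable {R n : Type*} [CommRing R] [Fintype n] [DecidableEq n]

theorem eval_charpolyRev_eq_det (M : Matrix n n R) (t : R) :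
    M.charpolyRev.eval t = (1 - t • M).det := by
  rw [charpolyRev, ← Polynomial.coe_evalRingHom, RingHom.map_det, RingHom.mapMatrix_apply]
  congr 1
  ext i j
  by_cases hij : i = j <;> simp [hij] <;> ring

theorem charpoly_eq_X_pow_of_charpolyRev_eq_one [Nontrivial R] {M : Matrix n n R}
    (h : M.charpolyRev = 1) : M.charpoly = Polynomial.X ^ Fintype.card n := by
  rw [← Polynomial.reflect_reflect (N := Fintype.card n) (p := M.charpoly),
    ← M.charpoly_natDegree_eq_dim, ← Polynomial.reverse, reverse_charpoly, h,
    Polynomial.reflect_one]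

theorem pow_card_eq_zero_of_charpolyRev_eq_one [Nontrivial R] {M : Matrix n n R}
    (h : M.charpolyRev = 1) : M ^ Fintype.card n = 0 := by
  simpa [charpoly_eq_X_pow_of_charpolyRev_eq_one h] using M.aeval_self_charpoly

theorem pow_card_eq_zero_of_forall_det_one_add_pow_smul [IsDomain R] [Infinite R]
    {M : Matrix n n R} {m : ℕ} (hm : 0 < m) (h : ∀ c : R, (1 + c ^ m • M).det = 1) :
    M ^ Fintype.card n = 0 := by
  have hexpand : Polynomial.expand R m (-M).charpolyRev = Polynomial.expand R m 1 :=
    Polynomial.funext fun c => by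
      rw [Polynomial.expand_eval, eval_charpolyRev_eq_det, smul_neg, sub_neg_eq_add, h, map_one,
        Polynomial.eval_one]
  have hneg := pow_card_eq_zero_of_charpolyRev_eq_one (Polynomial.expand_injective hm hexpand)
  rwa [neg_pow, neg_one_pow_mul_eq_zero_iff] at hneg

end Matrix

theorem jacEval_eq_map_jacMat {k : Type*} [Field k] {n : ℕ} (H : Fin n → MvPolynomial (Fin n) k)
    (x : Fin n → k) : jacEval H x = (jacMat H).map (MvPolynomial.eval x) := by
  ext i j
  simp [jacEval, jacMat]

theorem det_one_add_jacEval {k : Type*} [Field k] {n : ℕ} (H : Fin n → MvPolynomial (Fin n) k)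
    (x : Fin n → k) : (1 + jacEval H x).det = MvPolynomial.eval x (1 + jacMat H).det := by
  rw [RingHom.map_det, map_add, map_one, RingHom.mapMatrix_apply, jacEval_eq_map_jacMat]

theorem jacEval_smul {k : Type*} [Field k] {n d : ℕ} {H : Fin n → MvPolynomial (Fin n) k}
    (hH : ∀ i, (H i).IsHomogeneous d) (c : k) (x : Fin n → k) :
    jacEval H (c • x) = c ^ (d - 1) • jacEval H x := by
  ext i j
  simp [jacEval, ((hH i).pderiv (i := j)).eval_smul]

/-- If `H` is homogeneous of degree `d ≥ 2` and `det(I + JH) = 1` identically, then `JH` is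
nilpotent: `JH(x)^n = 0` for every point `x`. -/
theorem jacobian_nilpotent_of_homogeneous_keller
    {k : Type*} [Field k] [CharZero k] {n : ℕ} (d : ℕ) (hd : 2 ≤ d)
    (H : Fin n → MvPolynomial (Fin n) k)
    (hhom : ∀ i, (H i).IsHomogeneous d)
    (hkeller : (1 + jacMat H).det = 1) :
    ∀ x : Fin n → k, (jacEval H x) ^ n = 0 := by
  intro x
  have hdet : ∀ c : k, (1 + c ^ (d - 1) • jacEval H x).det = 1 := fun c => by
    rw [← jacEval_smul hhom, det_one_add_jacEval, hkeller, map_one]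
  simpa using Matrix.pow_card_eq_zero_of_forall_det_one_add_pow_smul (by omega) hdet
end

section
/- Fix integers n ≥ 1, p ≥ 1 and a multi-index α. On the set of labelled typed proper rooted trees in S_{i,α} of height ≥ p (with distinguished spine v_0,…,v_p determined by the lexicographically greatest leaf at depth ≥ p), declare T ∼ T' if they are isomorphic as labelled trees except possibly for the types of the spine vertices v_1,…,v_{p−1}. Then ∼ is an equivalence relation and each equivalence class has exactly n^{p−1} elements. -/
/-- The label set `[α] = {(j,k) : 1 ≤ k ≤ α_j}` of leaf labels for the multi-index `α`. -/
abbrev Lbl (n : ℕ) (α : Fin n →₀ ℕ) : Type := (j : Fin n) × Fin (α j)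

/-- A proper rooted tree with leaves labelled bijectively by `Lbl n α` is encoded by the
laminar family of the leaf-label sets of the subtrees of its vertices: the family contains
the full set (the root) and all singletons (the leaves), does not contain `∅`, and any two
members are nested or disjoint.  The vertices of the tree are the members of the family,
the leaves being the singletons; since every internal vertex of a proper tree has at least
two children, this correspondence is a bijection onto isomorphism classes. -/
def Laminar {n : ℕ} {α : Fin n →₀ ℕ} (F : Finset (Finset (Lbl n α))) : Prop :=
  Finset.univ ∈ F ∧ (∀ x : Lbl n α, {x} ∈ F) ∧ (∅ : Finset (Lbl n α)) ∉ F ∧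
    ∀ S ∈ F, ∀ T ∈ F, S ⊆ T ∨ T ⊆ S ∨ Disjoint S T

/-- The depth (generation) of the vertex `S`: the number of strict ancestors of `S`. -/
def depthT {n : ℕ} {α : Fin n →₀ ℕ} (F : Finset (Finset (Lbl n α)))
    (S : Finset (Lbl n α)) : ℕ :=
  (F.filter fun T => S ⊂ T).card

/-- The height of the tree: the maximal depth of a vertex. -/
def heightT {n : ℕ} {α : Fin n →₀ ℕ} (F : Finset (Finset (Lbl n α))) : ℕ :=
  F.sup (depthT F)

/-- The children of the vertex `S`: the maximal members of `F` strictly below `S`. -/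
def childrenT {n : ℕ} {α : Fin n →₀ ℕ} (F : Finset (Finset (Lbl n α)))
    (S : Finset (Lbl n α)) : Finset (Finset (Lbl n α)) :=
  F.filter fun C => C ⊂ S ∧ ¬∃ T ∈ F, C ⊂ T ∧ T ⊂ S

/-- The outdegree `μ(S)` of the vertex `S` with respect to the typing `τ`: the multi-index
counting the children of `S` by type. -/
noncomputable def outdeg {n : ℕ} {α : Fin n →₀ ℕ} (F : Finset (Finset (Lbl n α)))
    (τ : Finset (Lbl n α) → Fin n) (S : Finset (Lbl n α)) : Fin n →₀ ℕ :=
  ∑ C ∈ childrenT F S, Finsupp.single (τ C) 1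

/-- The energy `E_H(T) = ∏_{S internal} H_{τ(S), μ(S)}` of a typed labelled tree;
the internal vertices are the non-singleton members of `F`. -/
noncomputable def energy {k : Type*} [Field k] {n : ℕ} {α : Fin n →₀ ℕ}
    (Hc : Fin n → (Fin n →₀ ℕ) → k) (F : Finset (Finset (Lbl n α)))
    (τ : Finset (Lbl n α) → Fin n) : k :=
  ∏ S ∈ F.filter (fun S => 1 < S.card), Hc (τ S) (outdeg F τ S)

/-- The data of a typed labelled tree: a family of subsets of the label set, together with a
typing function (normalized to the value `i` off the family, so that each isomorphism class
of tree is encoded exactly once). -/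
abbrev TreeData (n : ℕ) (α : Fin n →₀ ℕ) : Type :=
  Finset (Finset (Lbl n α)) × (Finset (Lbl n α) → Fin n)

/-- The tree data `T` encodes an element of `𝕊_{i,α}`: the family is laminar, the root
(the full set) has type `i`, each leaf (singleton) `{(j,k)}` has type `j`, and the typing is
normalized to `i` off the family. -/
def Good {n : ℕ} {α : Fin n →₀ ℕ} (i : Fin n) (T : TreeData n α) : Prop :=
  Laminar T.1 ∧ T.2 Finset.univ = i ∧ (∀ x : Lbl n α, T.2 {x} = x.1) ∧
    ∀ S ∉ T.1, T.2 S = i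

/-- The lexicographic linear order on the label set `[α]`. -/
noncomputable instance {n : ℕ} {α : Fin n →₀ ℕ} : LinearOrder (Lbl n α) :=
  LinearOrder.lift' (fun x => toLex ((x.1 : ℕ), (x.2 : ℕ))) (by
    rintro ⟨a, b⟩ ⟨c, d⟩ h
    have h' : ((a : ℕ), (b : ℕ)) = ((c : ℕ), (d : ℕ)) := h
    have h1 : (a : ℕ) = (c : ℕ) := congrArg Prod.fst h'
    have h2 : (b : ℕ) = (d : ℕ) := congrArg Prod.snd h'
    have hac : a = c := Fin.val_injective h1
    subst hac
    have hbd : b = d := Fin.val_injective h2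
    subst hbd
    rfl)

/-- The leaves of `F` lying in generation `p` or higher. -/
noncomputable def deepLeaves {n : ℕ} {α : Fin n →₀ ℕ} (p : ℕ)
    (F : Finset (Finset (Lbl n α))) : Finset (Lbl n α) :=
  Finset.univ.filter fun x => p ≤ depthT F {x}

open scoped Classical in
/-- The middle spine vertices `v₁, …, v_{p-1}` of a tree of height `≥ p`: writing `x*` for the
lexicographically greatest leaf at depth `≥ p` and `D` for its depth, these are the ancestors
of `x*` of depths `D - p + 1, …, D - 1`. -/
noncomputable def spineMid {n : ℕ} {α : Fin n →₀ ℕ} (p : ℕ)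
    (F : Finset (Finset (Lbl n α))) : Finset (Finset (Lbl n α)) :=
  if h : (deepLeaves p F).Nonempty then
    F.filter fun S => (deepLeaves p F).max' h ∈ S ∧
      depthT F {(deepLeaves p F).max' h} - p + 1 ≤ depthT F S ∧
      depthT F S ≤ depthT F {(deepLeaves p F).max' h} - 1
  else ∅

/-- Two trees are related iff they are identical except possibly for the types of the middle
spine vertices `v₁, …, v_{p-1}`. -/
def SpineRel {n : ℕ} {α : Fin n →₀ ℕ} (p : ℕ) (T T' : TreeData n α) : Prop :=
  T.1 = T'.1 ∧ ∀ S ∉ spineMid p T.1, T.2 S = T'.2 S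

section SpineAux

open Classical

variable {n : ℕ} {α : Fin n →₀ ℕ}

lemma depthT_filter_mem (F : Finset (Finset (Lbl n α))) (x : Lbl n α)
    {S : Finset (Lbl n α)} (hx : x ∈ S) :
    depthT F S = ((F.filter fun T => x ∈ T).filter fun T => S ⊂ T).card := by
  unfold depthT
  congr 1
  ext T
  simp only [Finset.mem_filter]
  constructor
  · rintro ⟨hT, hST⟩
    exact ⟨⟨hT, hST.1 hx⟩, hST⟩
  · rintro ⟨⟨hT, _⟩, hST⟩
    exact ⟨hT, hST⟩

lemma depthT_lt_of_ssubset (F : Finset (Finset (Lbl n α)))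
    {S T : Finset (Lbl n α)} (hT : T ∈ F) (hST : S ⊂ T) :
    depthT F T < depthT F S := by
  unfold depthT
  apply Finset.card_lt_card
  rw [Finset.ssubset_iff_of_subset]
  · exact ⟨T, Finset.mem_filter.mpr ⟨hT, hST⟩,
      fun hmem => lt_irrefl T (Finset.mem_filter.mp hmem).2⟩
  · intro U hU
    rw [Finset.mem_filter] at hU ⊢
    exact ⟨hU.1, hST.trans hU.2⟩

lemma spineMid_spec (p : ℕ) (hp : 1 ≤ p) (F : Finset (Finset (Lbl n α)))
    (hF : Laminar F) (hh : p ≤ heightT F) :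
    (spineMid p F).card = p - 1 ∧ spineMid p F ⊆ F ∧
      (Finset.univ : Finset (Lbl n α)) ∉ spineMid p F ∧
      ∀ y : Lbl n α, ({y} : Finset (Lbl n α)) ∉ spineMid p F := by
  obtain ⟨hu, hsing, hne', hlam⟩ := hF
  have h0 : (0 : ℕ) < p := hp
  have hne : (deepLeaves p F).Nonempty := by
    rw [heightT, Finset.le_sup_iff h0] at hh
    obtain ⟨S, hSF, hS⟩ := hh
    have hSne : S.Nonempty := by
      rcases S.eq_empty_or_nonempty with h | h
      · exact absurd (h ▸ hSF) hne'
      · exact h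
    obtain ⟨x, hx⟩ := hSne
    refine ⟨x, ?_⟩
    simp only [deepLeaves, Finset.mem_filter, Finset.mem_univ, true_and]
    refine le_trans hS ?_
    unfold depthT
    apply Finset.card_le_card
    intro T hT
    rw [Finset.mem_filter] at hT ⊢
    exact ⟨hT.1, Finset.ssubset_of_subset_of_ssubset
      (Finset.singleton_subset_iff.mpr hx) hT.2⟩
  set x := (deepLeaves p F).max' hne with hxdef
  set C := F.filter (fun T => x ∈ T) with hCdef
  have hxC : ({x} : Finset (Lbl n α)) ∈ C := by
    rw [hCdef, Finset.mem_filter]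
    exact ⟨hsing x, Finset.mem_singleton_self x⟩
  have hCne : C.Nonempty := ⟨_, hxC⟩
  set D := depthT F {x} with hDdef
  have hpD : p ≤ D := by
    have hmem := (deepLeaves p F).max'_mem hne
    simp only [deepLeaves, Finset.mem_filter] at hmem
    exact hmem.2
  have hD : D = C.card - 1 := by
    rw [hDdef, depthT_filter_mem F x (Finset.mem_singleton_self x)]
    have heq : (C.filter fun T => ({x} : Finset (Lbl n α)) ⊂ T) = C.erase {x} := by
      ext T
      simp only [Finset.mem_filter, Finset.mem_erase]
      constructor
      · rintro ⟨hT, hsub⟩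
        exact ⟨Ne.symm hsub.ne, hT⟩
      · rintro ⟨hne2, hT⟩
        have hxT : x ∈ T := by
          rw [hCdef, Finset.mem_filter] at hT
          exact hT.2
        exact ⟨hT, Finset.ssubset_iff_subset_ne.mpr
          ⟨Finset.singleton_subset_iff.mpr hxT, Ne.symm hne2⟩⟩
    rw [← hCdef, heq, Finset.card_erase_of_mem hxC]
  have hinj : Set.InjOn (depthT F) (C : Set (Finset (Lbl n α))) := by
    intro S hS T hT hST
    rw [Finset.mem_coe, hCdef, Finset.mem_filter] at hS hT
    by_contra hne2
    rcases hlam S hS.1 T hT.1 with h | h | h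
    · have hss : S ⊂ T := ⟨h, fun h' => hne2 (subset_antisymm h h')⟩
      exact (ne_of_gt (depthT_lt_of_ssubset F hT.1 hss)) hST
    · have hss : T ⊂ S := ⟨h, fun h' => hne2 (subset_antisymm h' h)⟩
      exact (ne_of_gt (depthT_lt_of_ssubset F hS.1 hss)) hST.symm
    · exact (Finset.disjoint_left.mp h hS.2) hT.2
  have himg : C.image (depthT F) = Finset.range C.card := by
    apply Finset.eq_of_subset_of_card_le
    · intro d hd
      simp only [Finset.mem_image] at hd
      obtain ⟨S, hS, rfl⟩ := hd
      rw [Finset.mem_range]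
      have hxS : x ∈ S := by
        rw [hCdef, Finset.mem_filter] at hS
        exact hS.2
      calc depthT F S = (C.filter fun T => S ⊂ T).card := by
            rw [depthT_filter_mem F x hxS, hCdef]
        _ ≤ (C.erase S).card := Finset.card_le_card (by
            intro T hT
            rw [Finset.mem_filter] at hT
            exact Finset.mem_erase.mpr
              ⟨fun h => hT.2.2 (h ▸ Finset.Subset.refl _), hT.1⟩)
        _ < C.card := Finset.card_erase_lt_of_mem hS
    · rw [Finset.card_range, Finset.card_image_of_injOn hinj]
  have hsm : spineMid p F = C.filter
      (fun S => depthT F S ∈ Finset.Icc (D - p + 1) (D - 1)) := by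
    rw [spineMid, dif_pos hne, hCdef, Finset.filter_filter]
    apply Finset.filter_congr
    intro S _
    simp only [← hxdef, ← hDdef, Finset.mem_Icc]
    try tauto
  have hCcard : D + 1 = C.card := by
    have h1 : 1 ≤ C.card := Finset.card_pos.mpr hCne
    omega
  have hcard : (spineMid p F).card = p - 1 := by
    rw [hsm]
    have h1 : (C.filter fun S => depthT F S ∈ Finset.Icc (D - p + 1) (D - 1)).card
        = ((C.filter fun S =>
            depthT F S ∈ Finset.Icc (D - p + 1) (D - 1)).image (depthT F)).card := by
      rw [Finset.card_image_of_injOn (hinj.mono (by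
        intro y hy
        exact Finset.mem_coe.mpr (Finset.mem_of_mem_filter y (Finset.mem_coe.mp hy))))]
    have h2 : ((C.filter fun S =>
        depthT F S ∈ Finset.Icc (D - p + 1) (D - 1)).image (depthT F))
        = Finset.Icc (D - p + 1) (D - 1) := by
      ext d
      simp only [Finset.mem_image, Finset.mem_filter]
      constructor
      · rintro ⟨S, ⟨_, hd⟩, rfl⟩
        exact hd
      · intro hd
        have hdr : d ∈ Finset.range C.card := by
          rw [Finset.mem_range]
          rw [Finset.mem_Icc] at hd
          omega
        rw [← himg, Finset.mem_image] at hdr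
        obtain ⟨S, hS, rfl⟩ := hdr
        exact ⟨S, ⟨hS, hd⟩, rfl⟩
    rw [h1, h2, Nat.card_Icc]
    omega
  have huniv : (Finset.univ : Finset (Lbl n α)) ∉ spineMid p F := by
    rw [hsm]
    intro h
    have h' := (Finset.mem_filter.mp h).2
    rw [Finset.mem_Icc] at h'
    have h0' : depthT F Finset.univ = 0 := by
      rw [depthT, Finset.card_eq_zero, Finset.filter_eq_empty_iff]
      intro T _ hT
      rw [Finset.ssubset_def] at hT
      exact hT.2 (Finset.subset_univ T)
    rw [h0'] at h'
    omega
  have hsingnot : ∀ y : Lbl n α, ({y} : Finset (Lbl n α)) ∉ spineMid p F := by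
    intro y hy
    rw [hsm] at hy
    have h1 := Finset.mem_filter.mp hy
    have hxy : x ∈ ({y} : Finset (Lbl n α)) := by
      have := h1.1
      rw [hCdef, Finset.mem_filter] at this
      exact this.2
    rw [Finset.mem_singleton] at hxy
    subst hxy
    have h2 := (Finset.mem_Icc.mp h1.2).2
    rw [← hDdef] at h2
    omega
  have hsub : spineMid p F ⊆ F := by
    rw [hsm]
    intro S hS
    have := Finset.mem_of_mem_filter S hS
    rw [hCdef, Finset.mem_filter] at this
    exact this.1
  exact ⟨hcard, hsub, huniv, hsingnot⟩

end SpineAux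

open scoped Classical in
/-- On the trees of `𝕊_{i,α}` of height at least `p`, the relation "identical except for the
types of the middle spine vertices `v₁,…,v_{p-1}`" is an equivalence relation, and every
equivalence class has exactly `n^(p-1)` elements. -/
theorem spine_equivalence_classes
    {n : ℕ} (p : ℕ) (hp : 1 ≤ p) (α : Fin n →₀ ℕ) (i : Fin n) :
    Equivalence (fun T T' : {T : TreeData n α // Good i T ∧ p ≤ heightT T.1} =>
      SpineRel p T.1 T'.1) ∧
    ∀ T : TreeData n α, Good i T → p ≤ heightT T.1 →
      (Finset.univ.filter fun T' : TreeData n α =>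
        (Good i T' ∧ p ≤ heightT T'.1) ∧ SpineRel p T T').card = n ^ (p - 1) := by
  classical
  constructor
  · refine ⟨fun T => ⟨rfl, fun _ _ => rfl⟩, ?_, ?_⟩
    · rintro T T' ⟨h1, h2⟩
      refine ⟨h1.symm, fun S hS => ?_⟩
      rw [← h1] at hS
      exact (h2 S hS).symm
    · rintro T T' T'' ⟨h1, h2⟩ ⟨h1', h2'⟩
      refine ⟨h1.trans h1', fun S hS => ?_⟩
      exact (h2 S hS).trans (h2' S (by rw [← h1]; exact hS))
  · rintro ⟨F, τ⟩ hGood hht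
    obtain ⟨hcard, hsub, huniv, hsing'⟩ := spineMid_spec p hp F hGood.1 hht
    set M := spineMid p F with hM
    have key : (Finset.univ.filter fun T' : TreeData n α =>
        (Good i T' ∧ p ≤ heightT T'.1) ∧ SpineRel p (F, τ) T').card
        = (Finset.univ : Finset (↥M → Fin n)).card := by
      apply Finset.card_bij' (fun T' _ => fun s : ↥M => T'.2 s.1)
        (fun g _ => ((F, fun S => if h : S ∈ M then g ⟨S, h⟩ else τ S) : TreeData n α))
      · intro T' hT'
        exact Finset.mem_univ _
      · intro g _
        rw [Finset.mem_filter]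
        refine ⟨Finset.mem_univ _, ⟨⟨hGood.1, ?_, ?_, ?_⟩, hht⟩, rfl, ?_⟩
        · simp only [dif_neg huniv]
          exact hGood.2.1
        · intro y
          simp only [dif_neg (hsing' y)]
          exact hGood.2.2.1 y
        · intro S hS
          simp only [dif_neg (fun h => hS (hsub h))]
          exact hGood.2.2.2 S hS
        · intro S hS
          have hS' : S ∉ M := hS
          show τ S = if h : S ∈ M then g ⟨S, h⟩ else τ S
          simp [hS']
      · intro T' hT'
        rw [Finset.mem_filter] at hT'
        obtain ⟨_, _, hF', hoff⟩ := hT'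
        refine Prod.ext hF' (funext fun S => ?_)
        by_cases h : S ∈ M
        · simp only [dif_pos h]
        · simp only [dif_neg h]
          exact hoff S h
      · intro g _
        funext s
        show (if h : ↑s ∈ M then g ⟨↑s, h⟩ else τ ↑s) = g s
        rw [dif_pos s.2]
    rw [key, Finset.card_univ, Fintype.card_fun, Fintype.card_fin,
      Fintype.card_coe, hcard]
end
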